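/- arXiv:2407.12518 — 2 statements merged into one kernel-verified Lean document; each statement's English description precedes it below -/
import Mathlib

section
/- For every initial data x₀, v₀ ∈ ℝ^d there exists a global solution x ∈ C²([0,∞); ℝ^d) of the inertial system with implicit Hessian damping, i.e. ẍ(t) + γ(t)ẋ(t) + ∇f(x(t) + βẋ(t)) = 0 for all t > 0 with x(0) = x₀, ẋ(0) = v₀; moreover any such global solution satisfies ∫₀^∞ ‖ẋ(t)‖² dt < ∞ and ∫₀^∞ ‖∇f(x(t) + βẋ(t))‖² dt < ∞. -/
open Filter Topology Set MeasureTheory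

noncomputable section

section ISIHDAux

variable {E : Type*} [NormedAddCommGroup E] [InnerProductSpace ℝ E] [CompleteSpace E]

variable {E : Type*} [NormedAddCommGroup E] [InnerProductSpace ℝ E] [CompleteSpace E]

local notation "⟪" x ", " y "⟫" => @inner ℝ _ _ x y

lemma isihd_gradient_eq (f : E → ℝ) :
    gradient f = fun x => (InnerProductSpace.toDual ℝ E).symm (fderiv ℝ f x) := rfl

lemma isihd_grad_continuous {f : E → ℝ} (hf : ContDiff ℝ 2 f) : Continuous (gradient f) := by
  rw [isihd_gradient_eq]
  exact (InnerProductSpace.toDual ℝ E).symm.continuous.comp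
    (hf.fderiv_right (m := 1) (by norm_num)).continuous

lemma isihd_grad_lipschitzOnWith {f : E → ℝ} (hf : ContDiff ℝ 2 f) {s : Set E}
    (hs : Convex ℝ s) (hcs : IsCompact s) :
    ∃ K : NNReal, LipschitzOnWith K (gradient f) s := by
  have h1 : ContDiff ℝ 1 (fderiv ℝ f) := hf.fderiv_right (m := 1) (by norm_num)
  have h2 : Continuous (fderiv ℝ (fderiv ℝ f)) := (h1.fderiv_right (m := 0) (by norm_num)).continuous
  have h2' : ContinuousOn (fderiv ℝ (fderiv ℝ f)) s := h2.continuousOn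
  obtain ⟨K, hK⟩ := hcs.exists_bound_of_continuousOn (f := fderiv ℝ (fderiv ℝ f)) h2'
  have hlip : LipschitzOnWith (Real.toNNReal K) (fderiv ℝ f) s := by
    refine Convex.lipschitzOnWith_of_nnnorm_hasFDerivWithin_le (𝕜 := ℝ)
      (f' := fderiv ℝ (fderiv ℝ f)) (fun x hx => ?_) (fun x hx => ?_) hs
    · exact ((h1.differentiable one_ne_zero).differentiableAt).hasFDerivAt.hasFDerivWithinAt
    · rw [← norm_toNNReal]
      exact Real.toNNReal_mono (hK x hx)
  refine ⟨Real.toNNReal K, fun x hx y hy => ?_⟩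
  have := hlip hx hy
  calc edist (gradient f x) (gradient f y)
      = edist (fderiv ℝ f x) (fderiv ℝ f y) := by
        rw [isihd_gradient_eq]
        exact (InnerProductSpace.toDual ℝ E).symm.isometry.edist_eq _ _
    _ ≤ _ := this

lemma isihd_chain {f : E → ℝ} (hf : ContDiff ℝ 2 f) {u : ℝ → E} {u' : E} {s : Set ℝ} {t : ℝ}
    (hu : HasDerivWithinAt u u' s t) :
    HasDerivWithinAt (fun τ => f (u τ)) ⟪gradient f (u t), u'⟫ s t := by
  have hd : HasFDerivAt f (fderiv ℝ f (u t)) (u t) :=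
    (hf.differentiable (by norm_num)).differentiableAt.hasFDerivAt
  have h := hd.comp_hasDerivWithinAt t hu
  have heq : fderiv ℝ f (u t) u' = ⟪gradient f (u t), u'⟫ := by
    rw [isihd_gradient_eq]
    exact (InnerProductSpace.toDual_symm_apply).symm
  rwa [heq] at h

/-- Energy decay for solutions on a compact interval. -/
lemma isihd_energy {f : E → ℝ} {γ : ℝ → ℝ} {β c C δ m : ℝ}
    (hf : ContDiff ℝ 2 f) (hm : ∀ z, m ≤ f z)
    (hγb : ∀ t, 0 ≤ t → c ≤ γ t ∧ γ t ≤ C)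
    (hc : 0 < c) (hβpos : 0 < β) (hδ : δ = c - β * C ^ 2 / 2) (hδpos : 0 < δ)
    {T : ℝ} (hT : 0 ≤ T) {x v a : ℝ → E}
    (hx : ∀ t ∈ Icc (0:ℝ) T, HasDerivWithinAt x (v t) (Icc 0 T) t)
    (hv : ∀ t ∈ Icc (0:ℝ) T, HasDerivWithinAt v (a t) (Icc 0 T) t)
    (hODE : ∀ t ∈ Icc (0:ℝ) T, a t = -(γ t • v t + gradient f (x t + β • v t))) :
    ∀ t ∈ Icc (0:ℝ) T,
      ‖v t‖ ^ 2 ≤ 2 * ((f (x 0 + β • v 0) + ‖v 0‖ ^ 2 / 2) - m) ∧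
      ∫ τ in (0:ℝ)..t, ((β / 2) * ‖gradient f (x τ + β • v τ)‖ ^ 2 + δ * ‖v τ‖ ^ 2) ≤
        (f (x 0 + β • v 0) + ‖v 0‖ ^ 2 / 2) - m := by
  have h0T : (0:ℝ) ∈ Icc (0:ℝ) T := ⟨le_refl 0, hT⟩
  set u : ℝ → E := fun τ => x τ + β • v τ with hu_def
  set G : ℝ → E := fun τ => gradient f (u τ) with hG_def
  set W : ℝ → ℝ := fun τ => f (u τ) + ‖v τ‖ ^ 2 / 2 with hW_def
  set h : ℝ → ℝ := fun τ => (β / 2) * ‖G τ‖ ^ 2 + δ * ‖v τ‖ ^ 2 with hh_def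
  -- continuity facts
  have hxc : ContinuousOn x (Icc 0 T) := fun t ht => (hx t ht).continuousWithinAt
  have hvc : ContinuousOn v (Icc 0 T) := fun t ht => (hv t ht).continuousWithinAt
  have huc : ContinuousOn u (Icc 0 T) := hxc.add (hvc.const_smul β)
  have hGc : ContinuousOn G (Icc 0 T) := (isihd_grad_continuous hf).comp_continuousOn huc
  have hhc : ContinuousOn h (Icc 0 T) := by
    apply ContinuousOn.add
    · exact (continuousOn_const.mul ((hGc.norm).pow 2))
    · exact (continuousOn_const.mul ((hvc.norm).pow 2))
  -- clamp
  set σ : ℝ → ℝ := fun τ => max 0 (min τ T) with hσ_def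
  have hσc : Continuous σ := continuous_const.max (continuous_id.min continuous_const)
  have hσmem : ∀ τ, σ τ ∈ Icc (0:ℝ) T := fun τ =>
    ⟨le_max_left _ _, max_le hT (min_le_right _ _)⟩
  have hσid : ∀ τ ∈ Icc (0:ℝ) T, σ τ = τ := fun τ hτ => by
    simp [hσ_def, min_eq_left hτ.2, max_eq_right hτ.1]
  have hhσc : Continuous (h ∘ σ) := hhc.comp_continuous hσc hσmem
  set Φ : ℝ → ℝ := fun τ => ∫ s in (0:ℝ)..τ, (h ∘ σ) s with hΦ_def
  have hΦd : ∀ τ : ℝ, HasDerivAt Φ ((h ∘ σ) τ) τ := fun τ =>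
    (hhσc.integral_hasStrictDerivAt 0 τ).hasDerivAt
  set φ : ℝ → ℝ := fun τ => W τ + Φ τ with hφ_def
  -- derivative of W
  have hW' : ∀ t ∈ Icc (0:ℝ) T,
      HasDerivWithinAt W (⟪G t, v t + β • a t⟫ + ⟪v t, a t⟫) (Icc 0 T) t := by
    intro t ht
    have hud : HasDerivWithinAt u (v t + β • a t) (Icc 0 T) t :=
      (hx t ht).add ((hv t ht).const_smul β)
    have h1 : HasDerivWithinAt (fun τ => f (u τ)) ⟪G t, v t + β • a t⟫ (Icc 0 T) t :=
      isihd_chain hf hud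
    have h2 : HasDerivWithinAt (fun τ => ‖v τ‖ ^ 2 / 2) ⟪v t, a t⟫ (Icc 0 T) t := by
      have hi := ((hv t ht).inner ℝ (hv t ht)).div_const 2
      have heqf : (fun τ => ⟪v τ, v τ⟫ / 2) = fun τ => ‖v τ‖ ^ 2 / 2 := by
        funext τ; rw [real_inner_self_eq_norm_sq]
      have heqv : (⟪v t, a t⟫ + ⟪a t, v t⟫) / 2 = ⟪v t, a t⟫ := by
        rw [real_inner_comm (a t) (v t)]; ring
      rw [heqf, heqv] at hi
      exact hi
    exact h1.add h2
  -- key inequality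
  have hkey : ∀ t ∈ Icc (0:ℝ) T, (⟪G t, v t + β • a t⟫ + ⟪v t, a t⟫) + h t ≤ 0 := by
    intro t ht
    rw [hODE t ht]
    have hGt : gradient f (x t + β • v t) = G t := rfl
    simp only [smul_neg, inner_neg_right, inner_add_right, inner_smul_right, smul_add,
      smul_smul, hGt]
    have hp : |⟪G t, v t⟫| ≤ ‖G t‖ * ‖v t‖ := abs_real_inner_le_norm _ _
    have hp1 : -(‖G t‖ * ‖v t‖) ≤ ⟪G t, v t⟫ := neg_le_of_abs_le hp
    have hp2 : ⟪G t, v t⟫ ≤ ‖G t‖ * ‖v t‖ := le_of_abs_le hp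
    have hvG : ⟪v t, G t⟫ = ⟪G t, v t⟫ := real_inner_comm _ _
    have hGG : ⟪G t, G t⟫ = ‖G t‖ ^ 2 := real_inner_self_eq_norm_sq _
    have hvv : ⟪v t, v t⟫ = ‖v t‖ ^ 2 := real_inner_self_eq_norm_sq _
    obtain ⟨hγ1, hγ2⟩ := hγb t ht.1
    have hγ0 : 0 ≤ γ t := hc.le.trans hγ1
    have hC0 : 0 < C := hc.trans_le (hγ1.trans hγ2)
    have hg0 : 0 ≤ ‖G t‖ := norm_nonneg _
    have hv0 : 0 ≤ ‖v t‖ := norm_nonneg _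
    rw [hh_def]
    simp only [hvG, hGG, hvv]
    ring_nf
    nlinarith [sq_nonneg (‖G t‖ - C * ‖v t‖), sq_nonneg (‖G t‖ + C * ‖v t‖),
      mul_nonneg hg0 hv0, mul_le_mul_of_nonneg_right hγ2 (mul_nonneg hg0 hv0),
      mul_le_mul_of_nonneg_right hγ1 (sq_nonneg (‖v t‖)),
      mul_le_mul_of_nonneg_right hγ2 (sq_nonneg (‖v t‖)),
      mul_le_mul_of_nonneg_left hp2 (mul_nonneg hβpos.le hγ0),
      mul_le_mul_of_nonneg_left hp1 (mul_nonneg hβpos.le hγ0)]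
  -- φ is antitone
  have hφd : ∀ t ∈ Icc (0:ℝ) T,
      HasDerivWithinAt φ ((⟪G t, v t + β • a t⟫ + ⟪v t, a t⟫) + (h ∘ σ) t) (Icc 0 T) t :=
    fun t ht => (hW' t ht).add (hΦd t).hasDerivWithinAt
  have hφanti : AntitoneOn φ (Icc 0 T) := by
    apply antitoneOn_of_deriv_nonpos (convex_Icc 0 T)
    · exact fun t ht => (hφd t ht).continuousWithinAt
    · intro t ht
      rw [interior_Icc] at ht
      exact ((hφd t (Ioo_subset_Icc_self ht)).hasDerivAt
        (Icc_mem_nhds ht.1 ht.2)).differentiableAt.differentiableWithinAt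
    · intro t ht
      rw [interior_Icc] at ht
      have hd := (hφd t (Ioo_subset_Icc_self ht)).hasDerivAt (Icc_mem_nhds ht.1 ht.2)
      rw [hd.deriv]
      have := hkey t (Ioo_subset_Icc_self ht)
      rw [Function.comp_apply, hσid t (Ioo_subset_Icc_self ht)] at *
      linarith
  -- conclude
  intro t ht
  have hφt : φ t ≤ φ 0 := hφanti h0T ht ht.1
  have hΦ0 : Φ 0 = 0 := intervalIntegral.integral_same
  have hΦt_eq : Φ t = ∫ τ in (0:ℝ)..t, h τ := by
    apply intervalIntegral.integral_congr
    intro τ hτ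
    rw [uIcc_of_le ht.1] at hτ
    have hτ' : τ ∈ Icc (0:ℝ) T := ⟨hτ.1, hτ.2.trans ht.2⟩
    simp [Function.comp_apply, hσid τ hτ']
  have hΦt_nonneg : 0 ≤ Φ t := by
    apply intervalIntegral.integral_nonneg ht.1
    intro τ _
    have : 0 ≤ h (σ τ) := by
      rw [hh_def]
      positivity
    simpa [Function.comp_apply] using this
  have hWt : m ≤ W t := by
    have h1 : m ≤ f (u t) := hm _
    have h2 : 0 ≤ ‖v t‖ ^ 2 / 2 := by positivity
    rw [hW_def]; dsimp only; linarith
  have hfu : m ≤ f (u t) := hm _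
  have hW0 : W 0 = f (x 0 + β • v 0) + ‖v 0‖ ^ 2 / 2 := rfl
  have hmain : W t + Φ t ≤ W 0 := by
    have h1 : φ t ≤ φ 0 := hφt
    have h2 : φ 0 = W 0 + Φ 0 := rfl
    have h3 : φ t = W t + Φ t := rfl
    rw [h2, h3, hΦ0] at h1
    linarith
  rw [hW0] at hmain
  have hWt_def : W t = f (u t) + ‖v t‖ ^ 2 / 2 := rfl
  rw [hWt_def] at hmain hWt
  constructor
  · nlinarith [hfu, hΦt_nonneg]
  · have hG2 : ∫ τ in (0:ℝ)..t, ((β / 2) * ‖gradient f (x τ + β • v τ)‖ ^ 2 + δ * ‖v τ‖ ^ 2)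
        = Φ t := by
      rw [hΦt_eq]
    rw [hG2]
    linarith


/-- From a solution on `Ici 0` (ODE for `t > 0`, continuous acceleration), the ODE
holds in resolved form on all of `Ici 0`. -/
lemma isihd_ode_closure {f : E → ℝ} {γ : ℝ → ℝ} {β : ℝ}
    (hf : ContDiff ℝ 2 f) (hγcont : ContinuousOn γ (Ici 0)) {x v a : ℝ → E}
    (hx : ∀ t ∈ Ici (0:ℝ), HasDerivWithinAt x (v t) (Ici 0) t)
    (hv : ∀ t ∈ Ici (0:ℝ), HasDerivWithinAt v (a t) (Ici 0) t)
    (hac : ContinuousOn a (Ici 0))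
    (hODE : ∀ t > (0:ℝ), a t + γ t • v t + gradient f (x t + β • v t) = 0) :
    ∀ t ∈ Ici (0:ℝ), a t = -(γ t • v t + gradient f (x t + β • v t)) := by
  have hxc : ContinuousOn x (Ici 0) := fun t ht => (hx t ht).continuousWithinAt
  have hvc : ContinuousOn v (Ici 0) := fun t ht => (hv t ht).continuousWithinAt
  set Ψ : ℝ → E := fun t => a t + (γ t • v t + gradient f (x t + β • v t)) with hΨ_def
  have hΨc : ContinuousOn Ψ (Ici 0) := by
    apply hac.add
    apply ContinuousOn.add
    · exact hγcont.smul hvc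
    · exact (isihd_grad_continuous hf).comp_continuousOn (hxc.add (hvc.const_smul β))
  have hΨ0 : ∀ t > (0:ℝ), Ψ t = 0 := by
    intro t ht
    have := hODE t ht
    rw [hΨ_def]
    dsimp only
    rw [← add_assoc]
    exact this
  have key : Ψ 0 = 0 := by
    have h1 : Tendsto Ψ (𝓝[>] (0:ℝ)) (𝓝 (Ψ 0)) :=
      ((hΨc 0 self_mem_Ici).mono Ioi_subset_Ici_self).tendsto
    have h2 : Tendsto Ψ (𝓝[>] (0:ℝ)) (𝓝 0) := by
      apply Tendsto.congr' _ tendsto_const_nhds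
      filter_upwards [self_mem_nhdsWithin] with t ht
      exact (hΨ0 t ht).symm
    exact tendsto_nhds_unique h1 h2
  intro t ht
  have hΨt : Ψ t = 0 := by
    rcases eq_or_lt_of_le (mem_Ici.mp ht) with h | h
    · rw [← h]; exact key
    · exact hΨ0 t h
  rw [hΨ_def] at hΨt
  dsimp only at hΨt
  exact eq_neg_of_add_eq_zero_left hΨt


/-- The `L²` estimates for a global solution. -/
lemma isihd_L2 {f : E → ℝ} {γ : ℝ → ℝ} {β c C δ m : ℝ}
    (hf : ContDiff ℝ 2 f) (hm : ∀ z, m ≤ f z)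
    (hγcont : ContinuousOn γ (Ici 0))
    (hγb : ∀ t, 0 ≤ t → c ≤ γ t ∧ γ t ≤ C)
    (hc : 0 < c) (hβpos : 0 < β) (hδ : δ = c - β * C ^ 2 / 2) (hδpos : 0 < δ)
    {x v a : ℝ → E}
    (hx : ∀ t ∈ Ici (0:ℝ), HasDerivWithinAt x (v t) (Ici 0) t)
    (hv : ∀ t ∈ Ici (0:ℝ), HasDerivWithinAt v (a t) (Ici 0) t)
    (hac : ContinuousOn a (Ici 0))
    (hODE : ∀ t > (0:ℝ), a t + γ t • v t + gradient f (x t + β • v t) = 0) :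
    IntegrableOn (fun t => ‖v t‖ ^ 2) (Ici 0) ∧
      IntegrableOn (fun t => ‖gradient f (x t + β • v t)‖ ^ 2) (Ici 0) := by
  have hODE' := isihd_ode_closure hf hγcont hx hv hac hODE
  set B : ℝ := (f (x 0 + β • v 0) + ‖v 0‖ ^ 2 / 2) - m with hB_def
  set G : ℝ → E := fun τ => gradient f (x τ + β • v τ) with hG_def
  set h : ℝ → ℝ := fun τ => (β / 2) * ‖G τ‖ ^ 2 + δ * ‖v τ‖ ^ 2 with hh_def
  have hxc : ContinuousOn x (Ici 0) := fun t ht => (hx t ht).continuousWithinAt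
  have hvc : ContinuousOn v (Ici 0) := fun t ht => (hv t ht).continuousWithinAt
  have hGc : ContinuousOn G (Ici 0) :=
    (isihd_grad_continuous hf).comp_continuousOn (hxc.add (hvc.const_smul β))
  have hhc : ContinuousOn h (Ici 0) :=
    (continuousOn_const.mul ((hGc.norm).pow 2)).add
      (continuousOn_const.mul ((hvc.norm).pow 2))
  have hhnn : ∀ t ∈ Ici (0:ℝ), 0 ≤ h t := by
    intro t _
    rw [hh_def]
    positivity
  -- uniform bound on interval integrals
  have hbound : ∀ n : ℕ, ∫ τ in (0:ℝ)..(n:ℝ), h τ ≤ B := by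
    intro n
    have hn0 : (0:ℝ) ≤ (n:ℝ) := Nat.cast_nonneg n
    have hsub : Icc (0:ℝ) (n:ℝ) ⊆ Ici (0:ℝ) := Icc_subset_Ici_self
    have := isihd_energy hf hm hγb hc hβpos hδ hδpos hn0
      (fun t ht => (hx t (hsub ht)).mono hsub)
      (fun t ht => (hv t (hsub ht)).mono hsub)
      (fun t ht => hODE' t (hsub ht))
      (n:ℝ) (right_mem_Icc.mpr hn0)
    exact this.2
  -- integrability of h on Ici 0
  have hIoc : ∀ n : ℕ, IntegrableOn h (Ioc (0:ℝ) (n:ℝ)) := by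
    intro n
    exact ((hhc.mono Icc_subset_Ici_self).integrableOn_Icc).mono_set Ioc_subset_Icc_self
  have hIci : IntegrableOn h (Ici (0:ℝ)) := by
    rw [integrableOn_Ici_iff_integrableOn_Ioi]
    apply integrableOn_Ioi_of_intervalIntegral_norm_bounded B 0 hIoc
      tendsto_natCast_atTop_atTop
    filter_upwards with n
    have : ∫ τ in (0:ℝ)..(n:ℝ), ‖h τ‖ = ∫ τ in (0:ℝ)..(n:ℝ), h τ := by
      apply intervalIntegral.integral_congr
      intro τ hτ
      rw [uIcc_of_le (Nat.cast_nonneg n)] at hτ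
      exact Real.norm_of_nonneg (hhnn τ hτ.1)
    rw [this]
    exact hbound n
  -- deduce the two integrabilities
  have hmeas_v : AEStronglyMeasurable (fun t => ‖v t‖ ^ 2) (volume.restrict (Ici (0:ℝ))) :=
    (((hvc.norm).pow 2)).aestronglyMeasurable measurableSet_Ici
  have hmeas_G : AEStronglyMeasurable (fun t => ‖G t‖ ^ 2) (volume.restrict (Ici (0:ℝ))) :=
    (((hGc.norm).pow 2)).aestronglyMeasurable measurableSet_Ici
  constructor
  · apply Integrable.mono' (hIci.const_mul (1/δ)) hmeas_v
    rw [ae_restrict_iff' measurableSet_Ici]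
    filter_upwards with t ht
    rw [Real.norm_of_nonneg (by positivity)]
    rw [hh_def]
    have : 0 ≤ (β / 2) * ‖G t‖ ^ 2 := by positivity
    calc ‖v t‖ ^ 2 = (1/δ) * (δ * ‖v t‖ ^ 2) := by field_simp
      _ ≤ (1/δ) * ((β / 2) * ‖G t‖ ^ 2 + δ * ‖v t‖ ^ 2) := by
          apply mul_le_mul_of_nonneg_left _ (by positivity)
          linarith
  · apply Integrable.mono' (hIci.const_mul (2/β)) hmeas_G
    rw [ae_restrict_iff' measurableSet_Ici]
    filter_upwards with t ht
    rw [Real.norm_of_nonneg (by positivity)]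
    rw [hh_def]
    have : 0 ≤ δ * ‖v t‖ ^ 2 := by positivity
    calc ‖G t‖ ^ 2 = (2/β) * ((β/2) * ‖G t‖ ^ 2) := by field_simp
      _ ≤ (2/β) * ((β / 2) * ‖G t‖ ^ 2 + δ * ‖v t‖ ^ 2) := by
          apply mul_le_mul_of_nonneg_left _ (by positivity)
          linarith


/-- The ISIHD phase-space vector field. -/
noncomputable def isihdF (f : E → ℝ) (γe : ℝ → ℝ) (β : ℝ) : ℝ → E × E → E × E :=
  fun t p => (p.2, -(γe t • p.2 + gradient f (p.1 + β • p.2)))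

lemma isihdF_cont {f : E → ℝ} (hf : ContDiff ℝ 2 f) {γe : ℝ → ℝ} (hγe : Continuous γe)
    (β : ℝ) : Continuous (Function.uncurry (isihdF f γe β)) := by
  apply Continuous.prodMk
  · exact (continuous_snd.comp continuous_snd)
  · apply Continuous.neg
    apply Continuous.add
    · exact (hγe.comp continuous_fst).smul (continuous_snd.comp continuous_snd)
    · exact (isihd_grad_continuous hf).comp
        ((continuous_fst.comp continuous_snd).add
          ((continuous_snd.comp continuous_snd).const_smul β))

lemma isihdF_lip [FiniteDimensional ℝ E] {f : E → ℝ} (hf : ContDiff ℝ 2 f) {γe : ℝ → ℝ} {β C : ℝ}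
    (hβ : 0 ≤ β) (hC : 0 ≤ C) (hγeb : ∀ t, |γe t| ≤ C) {r : ℝ} (hr : 0 ≤ r) :
    ∃ L : NNReal, ∀ t : ℝ, LipschitzOnWith L (isihdF f γe β t) (Metric.closedBall 0 r) := by
  obtain ⟨K, hK⟩ := isihd_grad_lipschitzOnWith hf
    (convex_closedBall (0:E) ((1+β)*r)) (isCompact_closedBall _ _)
  set Lr : ℝ := max 1 (C + (K:ℝ) * (1+β)) with hLr_def
  have hLr0 : 0 ≤ Lr := le_trans zero_le_one (le_max_left _ _)
  have hLr1 : 1 ≤ Lr := le_max_left _ _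
  have hLr2 : C + (K:ℝ) * (1+β) ≤ Lr := le_max_right _ _
  refine ⟨Real.toNNReal Lr, fun t => ?_⟩
  rw [lipschitzOnWith_iff_dist_le_mul]
  intro p hp q hq
  rw [Real.coe_toNNReal _ hLr0]
  have hdist0 : 0 ≤ dist p q := dist_nonneg
  have h1 : dist p.1 q.1 ≤ dist p q := le_max_left _ _
  have h2 : dist p.2 q.2 ≤ dist p q := le_max_right _ _
  have hmem : ∀ z : E × E, z ∈ Metric.closedBall (0 : E × E) r →
      z.1 + β • z.2 ∈ Metric.closedBall (0:E) ((1+β)*r) := by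
    intro z hz
    rw [Metric.mem_closedBall, dist_zero_right] at hz ⊢
    have hz1 : ‖z.1‖ ≤ r := le_trans (norm_fst_le z) hz
    have hz2 : ‖z.2‖ ≤ r := le_trans (norm_snd_le z) hz
    calc ‖z.1 + β • z.2‖ ≤ ‖z.1‖ + ‖β • z.2‖ := norm_add_le _ _
      _ = ‖z.1‖ + β * ‖z.2‖ := by rw [norm_smul, Real.norm_of_nonneg hβ]
      _ ≤ r + β * r := add_le_add hz1 (mul_le_mul_of_nonneg_left hz2 hβ)
      _ = (1+β)*r := by ring
  have hGd : dist (gradient f (p.1 + β • p.2)) (gradient f (q.1 + β • q.2)) ≤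
      (K:ℝ) * ((1+β) * dist p q) := by
    calc dist (gradient f (p.1 + β • p.2)) (gradient f (q.1 + β • q.2))
        ≤ (K:ℝ) * dist (p.1 + β • p.2) (q.1 + β • q.2) :=
          hK.dist_le_mul _ (hmem p hp) _ (hmem q hq)
      _ ≤ (K:ℝ) * ((1+β) * dist p q) := by
          apply mul_le_mul_of_nonneg_left _ (K.coe_nonneg)
          rw [dist_eq_norm]
          have : p.1 + β • p.2 - (q.1 + β • q.2) = (p.1 - q.1) + β • (p.2 - q.2) := by
            rw [smul_sub]; abel
          rw [this]
          calc ‖(p.1 - q.1) + β • (p.2 - q.2)‖ ≤ ‖p.1 - q.1‖ + ‖β • (p.2 - q.2)‖ :=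
                norm_add_le _ _
            _ = dist p.1 q.1 + β * dist p.2 q.2 := by
                rw [norm_smul, Real.norm_of_nonneg hβ, ← dist_eq_norm, ← dist_eq_norm]
            _ ≤ dist p q + β * dist p q := add_le_add h1
                (mul_le_mul_of_nonneg_left h2 hβ)
            _ = (1+β) * dist p q := by ring
  rw [Prod.dist_eq]
  apply max_le
  · dsimp only [isihdF]
    calc dist p.2 q.2 ≤ dist p q := h2
      _ ≤ Lr * dist p q := le_mul_of_one_le_left hdist0 hLr1
  · dsimp only [isihdF]
    rw [dist_neg_neg]
    calc dist (γe t • p.2 + gradient f (p.1 + β • p.2))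
          (γe t • q.2 + gradient f (q.1 + β • q.2))
        ≤ dist (γe t • p.2) (γe t • q.2) +
          dist (gradient f (p.1 + β • p.2)) (gradient f (q.1 + β • q.2)) :=
          dist_add_add_le _ _ _ _
      _ ≤ |γe t| * dist p.2 q.2 + (K:ℝ) * ((1+β) * dist p q) := by
          apply add_le_add _ hGd
          rw [dist_smul₀, Real.norm_eq_abs]
      _ ≤ C * dist p q + (K:ℝ) * ((1+β) * dist p q) := by
          apply add_le_add_left
          calc |γe t| * dist p.2 q.2 ≤ C * dist p.2 q.2 :=
                mul_le_mul_of_nonneg_right (hγeb t) dist_nonneg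
            _ ≤ C * dist p q := mul_le_mul_of_nonneg_left h2 hC
      _ = (C + (K:ℝ) * (1+β)) * dist p q := by ring
      _ ≤ Lr * dist p q := mul_le_mul_of_nonneg_right hLr2 hdist0


lemma isihd_hasDerivWithinAt_singleton (y : ℝ → E × E) (p : E × E) (t : ℝ) :
    HasDerivWithinAt y p {t} t := by
  rw [HasDerivWithinAt, HasDerivAtFilter]
  rw [hasFDerivAtFilter_iff_isLittleO, nhdsWithin_singleton]
  rw [Filter.prod_pure_pure, Asymptotics.isLittleO_pure]
  simp

/-- Solutions of the phase-space ODE on `[0, T]` with initial condition `p₀`. -/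
def isihdSol (F : ℝ → E × E → E × E) (p₀ : E × E) (T : ℝ) (y : ℝ → E × E) : Prop :=
  y 0 = p₀ ∧ ∀ t ∈ Icc (0:ℝ) T, HasDerivWithinAt y (F t (y t)) (Icc 0 T) t

lemma isihdSol_mono {F : ℝ → E × E → E × E} {p₀ : E × E} {T T' : ℝ} (hT' : T' ≤ T)
    {y : ℝ → E × E} (hy : isihdSol F p₀ T y) : isihdSol F p₀ T' y :=
  ⟨hy.1, fun t ht => (hy.2 t ⟨ht.1, ht.2.trans hT'⟩).mono (Icc_subset_Icc_right hT')⟩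

lemma isihdSol_fst {F : ℝ → E × E → E × E} {T : ℝ} {y : ℝ → E × E} {t : ℝ} {s : Set ℝ}
    (h : HasDerivWithinAt y (F t (y t)) s t) :
    HasDerivWithinAt (fun τ => (y τ).1) (F t (y t)).1 s t :=
  (ContinuousLinearMap.fst ℝ E E).hasFDerivAt.comp_hasDerivWithinAt t h

lemma isihdSol_snd {F : ℝ → E × E → E × E} {T : ℝ} {y : ℝ → E × E} {t : ℝ} {s : Set ℝ}
    (h : HasDerivWithinAt y (F t (y t)) s t) :
    HasDerivWithinAt (fun τ => (y τ).2) (F t (y t)).2 s t :=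
  (ContinuousLinearMap.snd ℝ E E).hasFDerivAt.comp_hasDerivWithinAt t h

/-- A priori bound on solutions, coming from energy decay. -/
lemma isihd_apriori {f : E → ℝ} {γ : ℝ → ℝ} {β c C δ m : ℝ}
    (hf : ContDiff ℝ 2 f) (hm : ∀ z, m ≤ f z)
    (hγb : ∀ t, 0 ≤ t → c ≤ γ t ∧ γ t ≤ C)
    (hc : 0 < c) (hβpos : 0 < β) (hδ : δ = c - β * C ^ 2 / 2) (hδpos : 0 < δ)
    {p₀ : E × E} {T : ℝ} (hT : 0 ≤ T) {y : ℝ → E × E}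
    (hy : isihdSol (isihdF f (fun t => γ (max t 0)) β) p₀ T y) :
    ∀ t ∈ Icc (0:ℝ) T,
      ‖y t‖ ≤ ‖p₀.1‖ + ‖p₀.2‖ +
        Real.sqrt (2 * ((f (p₀.1 + β • p₀.2) + ‖p₀.2‖ ^ 2 / 2) - m)) * (T + 1) := by
  set x : ℝ → E := fun τ => (y τ).1 with hx_def
  set v : ℝ → E := fun τ => (y τ).2 with hv_def
  set a : ℝ → E := fun τ => -(γ (max τ 0) • v τ + gradient f (x τ + β • v τ)) with ha_def
  have hx : ∀ t ∈ Icc (0:ℝ) T, HasDerivWithinAt x (v t) (Icc 0 T) t :=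
    fun t ht => isihdSol_fst (T := T) (hy.2 t ht)
  have hv : ∀ t ∈ Icc (0:ℝ) T, HasDerivWithinAt v (a t) (Icc 0 T) t :=
    fun t ht => isihdSol_snd (T := T) (hy.2 t ht)
  have hODE : ∀ t ∈ Icc (0:ℝ) T, a t = -(γ t • v t + gradient f (x t + β • v t)) := by
    intro t ht
    rw [ha_def]
    dsimp only
    rw [max_eq_left ht.1]
  have henergy := isihd_energy hf hm hγb hc hβpos hδ hδpos hT hx hv hODE
  have hx0 : x 0 = p₀.1 := congrArg Prod.fst hy.1
  have hv0 : v 0 = p₀.2 := congrArg Prod.snd hy.1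
  rw [hx0, hv0] at henergy
  set B : ℝ := (f (p₀.1 + β • p₀.2) + ‖p₀.2‖ ^ 2 / 2) - m with hB_def
  set M : ℝ := Real.sqrt (2 * B) with hM_def
  have hM0 : 0 ≤ M := Real.sqrt_nonneg _
  have hMv : ∀ t ∈ Icc (0:ℝ) T, ‖v t‖ ≤ M := by
    intro t ht
    have h1 := (henergy t ht).1
    calc ‖v t‖ = Real.sqrt (‖v t‖ ^ 2) := (Real.sqrt_sq (norm_nonneg _)).symm
      _ ≤ Real.sqrt (2 * B) := Real.sqrt_le_sqrt h1
  intro t ht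
  have hxd : ‖x t - x 0‖ ≤ M * (t - 0) :=
    norm_image_sub_le_of_norm_deriv_le_segment' hx
      (fun τ hτ => hMv τ (Ico_subset_Icc_self hτ)) t ht
  have hxt : ‖x t‖ ≤ ‖p₀.1‖ + M * T := by
    calc ‖x t‖ = ‖(x t - x 0) + x 0‖ := by rw [sub_add_cancel]
      _ ≤ ‖x t - x 0‖ + ‖x 0‖ := norm_add_le _ _
      _ ≤ M * (t - 0) + ‖p₀.1‖ := by rw [hx0] at hxd ⊢; exact add_le_add_left hxd _
      _ ≤ M * T + ‖p₀.1‖ := by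
          apply add_le_add_left
          apply mul_le_mul_of_nonneg_left _ hM0
          linarith [ht.2]
      _ = ‖p₀.1‖ + M * T := by ring
  have hyt : ‖y t‖ = max ‖x t‖ ‖v t‖ := rfl
  rw [hyt]
  apply max_le
  · have : M * T ≤ M * (T + 1) := by nlinarith
    have h2 : (0:ℝ) ≤ ‖p₀.2‖ := norm_nonneg _
    linarith
  · have h1 : ‖v t‖ ≤ M := hMv t ht
    have h2 : M ≤ M * (T + 1) := by nlinarith
    have h3 : (0:ℝ) ≤ ‖p₀.1‖ := norm_nonneg _
    have h4 : (0:ℝ) ≤ ‖p₀.2‖ := norm_nonneg _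
    linarith


/-- Extension of a solution by a uniform time step. -/
lemma isihd_extend [FiniteDimensional ℝ E] {f : E → ℝ} {γe : ℝ → ℝ} {β C : ℝ}
    (hf : ContDiff ℝ 2 f) (hγe : Continuous γe) (hβ : 0 ≤ β) (hC : 0 ≤ C)
    (hγeb : ∀ t, |γe t| ≤ C) (p₀ : E × E) {Tmax r : ℝ} (hTmax : 0 ≤ Tmax) (hr : 0 ≤ r) :
    ∃ ε > (0:ℝ), ∀ T ∈ Icc (0:ℝ) Tmax, ∀ y, isihdSol (isihdF f γe β) p₀ T y →
      ‖y T‖ ≤ r → ∃ z, isihdSol (isihdF f γe β) p₀ (T + ε) z := by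
  set F := isihdF f γe β with hF_def
  have hFc : Continuous (Function.uncurry F) := isihdF_cont hf hγe β
  obtain ⟨Cb, hCb⟩ := ((isCompact_Icc (a := (0:ℝ)) (b := Tmax + 1)).prod
    (isCompact_closedBall (0 : E × E) (r + 1))).exists_bound_of_continuousOn hFc.continuousOn
  set Cb' : ℝ := max Cb 0 with hCb'_def
  have hCb'0 : 0 ≤ Cb' := le_max_right _ _
  obtain ⟨L, hL⟩ := isihdF_lip (γe := γe) hf hβ hC hγeb (r := r + 1) (by linarith)
  set ε : ℝ := min 1 (1 / (Cb' + 1)) with hε_def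
  have hεpos : 0 < ε := lt_min one_pos (by positivity)
  have hε1 : ε ≤ 1 := min_le_left _ _
  have hε2 : ε ≤ 1 / (Cb' + 1) := min_le_right _ _
  refine ⟨ε, hεpos, ?_⟩
  intro T hT y hy hyT
  have hball : Metric.closedBall (y T) 1 ⊆ Metric.closedBall (0 : E × E) (r + 1) := by
    apply Metric.closedBall_subset_closedBall'
    rw [dist_zero_right]
    linarith
  have hpl : IsPicardLindelof F (tmin := T) (tmax := T + ε) ⟨T, le_refl T, by linarith⟩ (y T)
      1 0 (Real.toNNReal Cb') L :=
    { lipschitzOnWith := fun t _ => (hL t).mono hball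
      continuousOn := fun p _ => (hFc.comp (continuous_id.prodMk continuous_const)).continuousOn
      norm_le := by
        intro t ht p hp
        have h1 : (t, p) ∈ Icc (0:ℝ) (Tmax + 1) ×ˢ Metric.closedBall (0 : E × E) (r + 1) := by
          constructor
          · exact ⟨le_trans hT.1 ht.1, le_trans ht.2 (by linarith [hT.2])⟩
          · exact hball hp
        rw [Real.coe_toNNReal _ hCb'0]
        exact le_trans (hCb _ h1) (le_max_left _ _)
      mul_max_le := by
        rw [Real.coe_toNNReal _ hCb'0]
        simp only [NNReal.coe_one, NNReal.coe_zero, sub_zero]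
        have : max (T + ε - T) (T - T) = ε := by
          rw [add_sub_cancel_left, sub_self]
          exact max_eq_left hεpos.le
        rw [this]
        calc Cb' * ε ≤ Cb' * (1 / (Cb' + 1)) := mul_le_mul_of_nonneg_left hε2 hCb'0
          _ ≤ 1 := by
            rw [mul_one_div, div_le_one (by linarith)]
            linarith }
  obtain ⟨g, hg0, hg⟩ := hpl.exists_eq_forall_mem_Icc_hasDerivWithinAt₀
  have hg0 : g T = y T := hg0
  set z : ℝ → E × E := fun t => if t ≤ T then y t else g t with hz_def
  have hzy : ∀ s ∈ Icc (0:ℝ) T, z s = y s := fun s hs => if_pos hs.2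
  have hzg : ∀ s ∈ Icc T (T + ε), z s = g s := by
    intro s hs
    rcases le_or_gt s T with h | h
    · have hsT : s = T := le_antisymm h hs.1
      rw [hz_def]
      dsimp only
      rw [if_pos h, hsT, hg0]
    · exact if_neg (not_le.mpr h)
  refine ⟨z, ?_, ?_⟩
  · rw [hzy 0 ⟨le_refl 0, hT.1⟩, hy.1]
  · intro t ht
    have hIcc_union : Icc (0:ℝ) T ∪ Icc T (T + ε) = Icc 0 (T + ε) :=
      Icc_union_Icc_eq_Icc hT.1 (by linarith)
    rcases lt_trichotomy t T with hlt | heq | hgt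
    · -- t < T
      have htT : t ∈ Icc (0:ℝ) T := ⟨ht.1, hlt.le⟩
      have h1 : HasDerivWithinAt z (F t (z t)) (Icc 0 T) t := by
        have := (hy.2 t htT).congr hzy (hzy t htT)
        rwa [hzy t htT]
      apply h1.mono_of_mem_nhdsWithin
      apply mem_nhdsWithin.mpr
      exact ⟨Iio T, isOpen_Iio, hlt, fun s hs => ⟨hs.2.1, hs.1.le⟩⟩
    · -- t = T
      subst heq
      have htT : t ∈ Icc (0:ℝ) t := ⟨ht.1, le_refl t⟩
      have h1 : HasDerivWithinAt z (F t (z t)) (Icc 0 t) t := by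
        have := (hy.2 t htT).congr hzy (hzy t htT)
        rwa [hzy t htT]
      have htT2 : t ∈ Icc t (t + ε) := ⟨le_refl t, by linarith⟩
      have h2 : HasDerivWithinAt z (F t (z t)) (Icc t (t + ε)) t := by
        have h3 := (hg t htT2).congr hzg (hzg t htT2)
        rw [hzg t htT2]
        exact h3
      have := h1.union h2
      rwa [hIcc_union] at this
    · -- t > T
      have htT : t ∈ Icc T (T + ε) := ⟨hgt.le, ht.2⟩
      have h1 : HasDerivWithinAt z (F t (z t)) (Icc T (T + ε)) t := by
        have := (hg t htT).congr hzg (hzg t htT)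
        rwa [hzg t htT]
      apply h1.mono_of_mem_nhdsWithin
      apply mem_nhdsWithin.mpr
      exact ⟨Ioi T, isOpen_Ioi, hgt, fun s hs => ⟨hs.1.le, hs.2.2⟩⟩


lemma isihd_global [FiniteDimensional ℝ E] {f : E → ℝ} {γ : ℝ → ℝ} {β c C δ m : ℝ}
    (hf : ContDiff ℝ 2 f) (hm : ∀ z, m ≤ f z) (hγcont : ContinuousOn γ (Ici 0))
    (hγb : ∀ t, 0 ≤ t → c ≤ γ t ∧ γ t ≤ C)
    (hc : 0 < c) (hβpos : 0 < β) (hδ : δ = c - β * C ^ 2 / 2) (hδpos : 0 < δ)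
    (p₀ : E × E) :
    ∀ T ≥ (0:ℝ), ∃ y, isihdSol (isihdF f (fun t => γ (max t 0)) β) p₀ T y := by
  set γe : ℝ → ℝ := fun t => γ (max t 0) with hγe_def
  have hγec : Continuous γe :=
    hγcont.comp_continuous (continuous_id.max continuous_const)
      (fun t => mem_Ici.mpr (le_max_right _ _))
  have hγeb : ∀ t, |γe t| ≤ C := by
    intro t
    obtain ⟨h1, h2⟩ := hγb (max t 0) (le_max_right _ _)
    rw [abs_le]
    constructor <;> [linarith; exact h2]
  have hC0 : 0 ≤ C := by
    obtain ⟨h1, h2⟩ := hγb 0 (le_refl 0)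
    linarith
  set F := isihdF f γe β with hF_def
  set A : Set ℝ := {T : ℝ | 0 ≤ T ∧ ∃ y, isihdSol F p₀ T y} with hA_def
  have h0A : (0:ℝ) ∈ A := by
    refine ⟨le_refl 0, fun _ => p₀, rfl, ?_⟩
    intro t ht
    have h1 : t = 0 := le_antisymm ht.2 ht.1
    subst h1
    rw [Icc_self]
    exact isihd_hasDerivWithinAt_singleton _ _ _
  have hdown : ∀ T ∈ A, ∀ T', 0 ≤ T' → T' ≤ T → T' ∈ A := by
    rintro T ⟨hT0, y, hy⟩ T' hT'0 hT'T
    exact ⟨hT'0, y, isihdSol_mono hT'T hy⟩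
  have hnb : ¬ BddAbove A := by
    intro hb
    set S : ℝ := sSup A with hS_def
    have hS0 : 0 ≤ S := le_csSup hb h0A
    set M : ℝ := Real.sqrt (2 * ((f (p₀.1 + β • p₀.2) + ‖p₀.2‖ ^ 2 / 2) - m)) with hM_def
    have hM0 : 0 ≤ M := Real.sqrt_nonneg _
    set ρ : ℝ := ‖p₀.1‖ + ‖p₀.2‖ + M * (S + 1) with hρ_def
    have hρ0 : 0 ≤ ρ := by
      have h1 : (0:ℝ) ≤ ‖p₀.1‖ := norm_nonneg _
      have h2 : (0:ℝ) ≤ ‖p₀.2‖ := norm_nonneg _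
      nlinarith
    obtain ⟨ε, hεpos, hext⟩ := isihd_extend hf hγec hβpos.le hC0 hγeb p₀ hS0 hρ0
    obtain ⟨T, hTA, hTgt⟩ := exists_lt_of_lt_csSup ⟨0, h0A⟩ (show S - ε < S by linarith)
    obtain ⟨hT0, y, hy⟩ := hTA
    have hTS : T ≤ S := le_csSup hb ⟨hT0, y, hy⟩
    have hyT : ‖y T‖ ≤ ρ := by
      have := isihd_apriori hf hm hγb hc hβpos hδ hδpos hT0 hy T
        (right_mem_Icc.mpr hT0)
      rw [hρ_def]
      have hmono : M * (T + 1) ≤ M * (S + 1) := by nlinarith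
      rw [← hM_def] at this
      linarith
    obtain ⟨z, hz⟩ := hext T ⟨hT0, hTS⟩ y hy hyT
    have hTε : T + ε ∈ A := ⟨by linarith, z, hz⟩
    have := le_csSup hb hTε
    linarith
  intro T hT
  obtain ⟨T', hT'A, hTT'⟩ := not_bddAbove_iff.mp hnb T
  exact (hdown T' hT'A T hT hTT'.le).2

lemma isihd_unique [FiniteDimensional ℝ E] {f : E → ℝ} {γe : ℝ → ℝ} {β C : ℝ}
    (hf : ContDiff ℝ 2 f) (hβ : 0 ≤ β) (hC : 0 ≤ C) (hγeb : ∀ t, |γe t| ≤ C)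
    {p₀ : E × E} {T : ℝ} (hT : 0 ≤ T) {y z : ℝ → E × E}
    (hy : isihdSol (isihdF f γe β) p₀ T y) (hz : isihdSol (isihdF f γe β) p₀ T z) :
    EqOn y z (Icc 0 T) := by
  set F := isihdF f γe β with hF_def
  have hyc : ContinuousOn y (Icc 0 T) := fun t ht => (hy.2 t ht).continuousWithinAt
  have hzc : ContinuousOn z (Icc 0 T) := fun t ht => (hz.2 t ht).continuousWithinAt
  obtain ⟨r1, hr1⟩ := isCompact_Icc.exists_bound_of_continuousOn hyc
  obtain ⟨r2, hr2⟩ := isCompact_Icc.exists_bound_of_continuousOn hzc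
  set r : ℝ := max (max r1 r2) 0 with hr_def
  have hr0 : 0 ≤ r := le_max_right _ _
  obtain ⟨L, hL⟩ := isihdF_lip (γe := γe) hf hβ hC hγeb hr0
  have hmemIci : ∀ t ∈ Ico (0:ℝ) T, Icc (0:ℝ) T ∈ 𝓝[Ici t] t := by
    intro t ht
    apply mem_nhdsWithin.mpr
    exact ⟨Iio T, isOpen_Iio, ht.2, fun s hs => ⟨le_trans ht.1 hs.2, hs.1.le⟩⟩
  apply ODE_solution_unique_of_mem_Icc_right (v := F)
    (s := fun _ => Metric.closedBall (0 : E × E) r) (K := L) (fun t _ => hL t)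
    hyc
    (fun t ht => (hy.2 t (Ico_subset_Icc_self ht)).mono_of_mem_nhdsWithin (hmemIci t ht))
    (fun t ht => by
      rw [Metric.mem_closedBall, dist_zero_right]
      exact le_trans (hr1 t (Ico_subset_Icc_self ht)) (le_trans (le_max_left _ _) (le_max_left _ _)))
    hzc
    (fun t ht => (hz.2 t (Ico_subset_Icc_self ht)).mono_of_mem_nhdsWithin (hmemIci t ht))
    (fun t ht => by
      rw [Metric.mem_closedBall, dist_zero_right]
      exact le_trans (hr2 t (Ico_subset_Icc_self ht)) (le_trans (le_max_right _ _) (le_max_left _ _)))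
    (hy.1.trans hz.1.symm)

/-- Global existence of a solution of the phase-space ODE on `[0, ∞)`. -/
lemma isihd_exists_global [FiniteDimensional ℝ E] {f : E → ℝ} {γ : ℝ → ℝ} {β c C δ m : ℝ}
    (hf : ContDiff ℝ 2 f) (hm : ∀ z, m ≤ f z) (hγcont : ContinuousOn γ (Ici 0))
    (hγb : ∀ t, 0 ≤ t → c ≤ γ t ∧ γ t ≤ C)
    (hc : 0 < c) (hβpos : 0 < β) (hδ : δ = c - β * C ^ 2 / 2) (hδpos : 0 < δ)
    (p₀ : E × E) :
    ∃ y : ℝ → E × E, y 0 = p₀ ∧ ∀ t ∈ Ici (0:ℝ),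
      HasDerivWithinAt y (isihdF f (fun τ => γ (max τ 0)) β t (y t)) (Ici 0) t := by
  set γe : ℝ → ℝ := fun t => γ (max t 0) with hγe_def
  have hγeb : ∀ t, |γe t| ≤ C := by
    intro t
    obtain ⟨h1, h2⟩ := hγb (max t 0) (le_max_right _ _)
    rw [abs_le]
    constructor <;> [linarith; exact h2]
  have hC0 : 0 ≤ C := by
    obtain ⟨h1, h2⟩ := hγb 0 (le_refl 0)
    linarith
  set F := isihdF f γe β with hF_def
  have hglob := isihd_global hf hm hγcont hγb hc hβpos hδ hδpos p₀
  choose Y hY using fun n : ℕ => hglob (n : ℝ) (Nat.cast_nonneg n)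
  set y : ℝ → E × E := fun τ => Y (⌊τ⌋₊ + 1) τ with hy_def
  have hagree : ∀ (n : ℕ), ∀ t ∈ Icc (0:ℝ) (n:ℝ), y t = Y n t := by
    intro n t ht
    set k : ℕ := ⌊t⌋₊ + 1 with hk_def
    have htk : t ≤ (k:ℝ) := by
      rw [hk_def]
      push_cast
      exact (Nat.lt_floor_add_one t).le
    set Tm : ℝ := min ((k:ℕ):ℝ) ((n:ℕ):ℝ) with hTm_def
    have hTm0 : 0 ≤ Tm := le_min (by positivity) (Nat.cast_nonneg n)
    have h1 : isihdSol F p₀ Tm (Y k) := isihdSol_mono (min_le_left _ _) (hY k)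
    have h2 : isihdSol F p₀ Tm (Y n) := isihdSol_mono (min_le_right _ _) (hY n)
    have heq := isihd_unique hf hβpos.le hC0 hγeb hTm0 h1 h2
    exact heq ⟨ht.1, le_min htk ht.2⟩
  refine ⟨y, ?_, ?_⟩
  · have h0 : (0:ℝ) ∈ Icc (0:ℝ) ((1:ℕ):ℝ) := by norm_num
    rw [hagree 1 0 h0]
    exact (hY 1).1
  · intro t ht
    set n : ℕ := ⌊t⌋₊ + 1 with hn_def
    have htn : t < (n:ℝ) := by
      rw [hn_def]
      push_cast
      exact Nat.lt_floor_add_one t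
    have htn' : t ∈ Icc (0:ℝ) (n:ℝ) := ⟨ht, htn.le⟩
    have h1 : Icc (0:ℝ) (n:ℝ) ∈ 𝓝[Ici 0] t :=
      mem_nhdsWithin.mpr ⟨Iio (n:ℝ), isOpen_Iio, htn, fun s hs => ⟨hs.2, hs.1.le⟩⟩
    have h2 : HasDerivWithinAt y (F t (Y n t)) (Icc 0 (n:ℝ)) t := by
      have := ((hY n).2 t htn').congr (fun s hs => hagree n s hs) (hagree n t htn')
      exact this
    rw [← hagree n t htn'] at h2
    exact h2.mono_of_mem_nhdsWithin h1


end ISIHDAux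

end

/-- A (global, `C²`) solution of the inertial system with implicit Hessian
damping (ISIHD) `ẍ(t) + γ(t)ẋ(t) + ∇f(x(t) + βẋ(t)) = 0`, encoded by its
position `x`, velocity `v` and (continuous) acceleration `a` on `[0,∞)`. -/
def IsISIHDSolution (d : ℕ) (f : EuclideanSpace ℝ (Fin d) → ℝ) (γ : ℝ → ℝ)
    (β : ℝ) (x v a : ℝ → EuclideanSpace ℝ (Fin d)) : Prop :=
  (∀ t ∈ Set.Ici (0:ℝ), HasDerivWithinAt x (v t) (Set.Ici 0) t) ∧
  (∀ t ∈ Set.Ici (0:ℝ), HasDerivWithinAt v (a t) (Set.Ici 0) t) ∧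
  ContinuousOn a (Set.Ici 0) ∧
  (∀ t > (0:ℝ), a t + γ t • v t + gradient f (x t + β • v t) = 0)

/-- Existence of a global solution of ISIHD for every initial
data, and the `L²` estimates `∫₀^∞ ‖ẋ(t)‖² dt < ∞` and
`∫₀^∞ ‖∇f(x(t) + βẋ(t))‖² dt < ∞` for any global solution. -/
theorem isihd_existence_and_L2
    (d : ℕ) (f : EuclideanSpace ℝ (Fin d) → ℝ) (γ : ℝ → ℝ) (β c C : ℝ)
    (hf : ContDiff ℝ 2 f) (hbdd : BddBelow (Set.range f))
    (hγ : ContinuousOn γ (Set.Ici 0))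
    (hc : 0 < c) (hcC : c ≤ C)
    (hγb : ∀ t ∈ Set.Ici (0:ℝ), c ≤ γ t ∧ γ t ≤ C)
    (hβpos : 0 < β) (hβ : β < 2 * c / C ^ 2) :
    (∀ x₀ v₀ : EuclideanSpace ℝ (Fin d),
      ∃ x v a : ℝ → EuclideanSpace ℝ (Fin d),
        IsISIHDSolution d f γ β x v a ∧ x 0 = x₀ ∧ v 0 = v₀) ∧
    (∀ x v a : ℝ → EuclideanSpace ℝ (Fin d), IsISIHDSolution d f γ β x v a →
      MeasureTheory.IntegrableOn (fun t => ‖v t‖ ^ 2) (Set.Ici 0) ∧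
      MeasureTheory.IntegrableOn (fun t => ‖gradient f (x t + β • v t)‖ ^ 2)
        (Set.Ici 0)) := by
  obtain ⟨m, hm⟩ : ∃ m, ∀ z, m ≤ f z :=
    ⟨sInf (Set.range f), fun z => csInf_le hbdd ⟨z, rfl⟩⟩
  have hC0 : 0 < C := lt_of_lt_of_le hc hcC
  have hδpos : 0 < c - β * C ^ 2 / 2 := by
    rw [lt_div_iff₀ (by positivity : (0:ℝ) < C ^ 2)] at hβ
    nlinarith
  have hγb' : ∀ t, 0 ≤ t → c ≤ γ t ∧ γ t ≤ C := fun t ht => hγb t ht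
  constructor
  · intro x₀ v₀
    obtain ⟨y, hy0, hyd⟩ := isihd_exists_global hf hm hγ hγb' hc hβpos rfl hδpos (x₀, v₀)
    refine ⟨fun t => (y t).1, fun t => (y t).2,
      fun t => -(γ (max t 0) • (y t).2 + gradient f ((y t).1 + β • (y t).2)),
      ⟨?_, ?_, ?_, ?_⟩, congrArg Prod.fst hy0, congrArg Prod.snd hy0⟩
    · intro t ht
      exact isihdSol_fst (T := (0:ℝ)) (hyd t ht)
    · intro t ht
      exact isihdSol_snd (T := (0:ℝ)) (hyd t ht)
    · have hyc : ContinuousOn y (Set.Ici 0) := fun t ht => (hyd t ht).continuousWithinAt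
      have hγec : Continuous (fun t : ℝ => γ (max t 0)) :=
        hγ.comp_continuous (continuous_id.max continuous_const)
          (fun t => Set.mem_Ici.mpr (le_max_right _ _))
      apply ContinuousOn.neg
      apply ContinuousOn.add
      · exact hγec.continuousOn.smul (continuous_snd.comp_continuousOn hyc)
      · exact (isihd_grad_continuous hf).comp_continuousOn
          ((continuous_fst.comp_continuousOn hyc).add
            ((continuous_snd.comp_continuousOn hyc).const_smul β))
    · intro t ht
      have hmax : max t 0 = t := max_eq_left ht.le
      dsimp only
      rw [hmax]
      abel
  · rintro x v a ⟨hx, hv, hac, hODE⟩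
    exact isihd_L2 hf hm hγ hγb' hc hβpos rfl hδpos hx hv hac hODE
end

section
/- Consider the discrete scheme ISIHD-Disc: y_k = x_k + α_k(x_k − x_{k−1}), x_{k+1} = y_k − s_k∇f(x_k + β'(x_k − x_{k−1})), with α_k = 1/(1 + γ_k h), s_k = h²α_k, β' = β/h. If β + h/2 < c/L, then Σ_k ‖∇f(x_k)‖² < ∞ and Σ_k ‖x_{k+1} − x_k‖² < ∞; in particular ‖∇f(x_k)‖ → 0 as k → ∞. -/
set_option maxHeartbeats 1000000

open Filter Topology Set InnerProductSpace

local notation "⟪" x ", " y "⟫" => @inner ℝ _ _ x y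

/-- Descent lemma for functions with Lipschitz gradient. -/
theorem descent_lemma_isihd {F : Type*} [NormedAddCommGroup F] [InnerProductSpace ℝ F]
    [CompleteSpace F] (f : F → ℝ) (L : ℝ) (hL : 0 ≤ L)
    (hdiff : Differentiable ℝ f)
    (hlip : LipschitzWith (Real.toNNReal L) (gradient f)) (p y : F) :
    f y ≤ f p + ⟪gradient f p, y - p⟫ + L / 2 * ‖y - p‖ ^ 2 := by
  set v := y - p with hv
  have hlipR : ∀ a b : F, ‖gradient f a - gradient f b‖ ≤ L * ‖a - b‖ := by
    intro a b
    have := hlip.dist_le_mul a b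
    rwa [dist_eq_norm, dist_eq_norm, Real.coe_toNNReal L hL] at this
  have hφ : ∀ t : ℝ, HasDerivAt (fun t : ℝ => f (p + t • v))
      ⟪gradient f (p + t • v), v⟫ t := by
    intro t
    have h1 : HasDerivAt (fun t : ℝ => p + t • v) v t := by
      simpa using ((hasDerivAt_id t).smul_const v).const_add p
    have h2 := ((hdiff (p + t • v)).hasGradientAt).hasFDerivAt
    have h3 := h2.comp_hasDerivAt t h1
    simpa [toDual_apply_apply, Function.comp_def] using h3
  set ψ : ℝ → ℝ := fun t => f p + t * ⟪gradient f p, v⟫ + L / 2 * ‖v‖ ^ 2 * t ^ 2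
      - f (p + t • v) with hψ
  have hψd : ∀ t : ℝ, HasDerivAt ψ
      (⟪gradient f p, v⟫ + L / 2 * ‖v‖ ^ 2 * (2 * t) - ⟪gradient f (p + t • v), v⟫) t := by
    intro t
    have ha : HasDerivAt (fun t : ℝ => f p + t * ⟪gradient f p, v⟫ + L / 2 * ‖v‖ ^ 2 * t ^ 2)
        (⟪gradient f p, v⟫ + L / 2 * ‖v‖ ^ 2 * (2 * t)) t := by
      have h1 : HasDerivAt (fun t : ℝ => t * ⟪gradient f p, v⟫) ⟪gradient f p, v⟫ t := by
        simpa using (hasDerivAt_id t).mul_const ⟪gradient f p, v⟫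
      have h2 : HasDerivAt (fun t : ℝ => L / 2 * ‖v‖ ^ 2 * t ^ 2)
          (L / 2 * ‖v‖ ^ 2 * (2 * t)) t := by
        simpa using (hasDerivAt_pow 2 t).const_mul (L / 2 * ‖v‖ ^ 2)
      exact (h1.const_add (f p)).add h2
    exact ha.sub (hφ t)
  have hmono : MonotoneOn ψ (Icc (0:ℝ) 1) := by
    apply monotoneOn_of_deriv_nonneg (convex_Icc 0 1)
    · exact (fun t _ => ((hψd t).differentiableAt).continuousAt.continuousWithinAt)
    · exact fun t _ => ((hψd t).differentiableAt).differentiableWithinAt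
    · intro t ht
      rw [interior_Icc] at ht
      rw [(hψd t).deriv]
      have key : ⟪gradient f (p + t • v), v⟫ - ⟪gradient f p, v⟫ ≤ L * t * ‖v‖ ^ 2 := by
        have h1 : ⟪gradient f (p + t • v) - gradient f p, v⟫
            ≤ ‖gradient f (p + t • v) - gradient f p‖ * ‖v‖ := real_inner_le_norm _ _
        have h2 : ‖gradient f (p + t • v) - gradient f p‖ ≤ L * (t * ‖v‖) := by
          have := hlipR (p + t • v) p
          simpa [norm_smul, abs_of_pos ht.1] using this
        have h3 : ‖gradient f (p + t • v) - gradient f p‖ * ‖v‖ ≤ L * (t * ‖v‖) * ‖v‖ :=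
          mul_le_mul_of_nonneg_right h2 (norm_nonneg v)
        rw [inner_sub_left] at h1
        nlinarith [norm_nonneg v]
      nlinarith
  have h01 : ψ 0 ≤ ψ 1 := hmono (by constructor <;> norm_num) (by constructor <;> norm_num)
    (by norm_num)
  have e0 : ψ 0 = 0 := by simp [hψ]
  have e1 : ψ 1 = f p + ⟪gradient f p, v⟫ + L / 2 * ‖v‖ ^ 2 - f y := by
    simp [hψ, hv]
  rw [e0, e1] at h01
  linarith

/-- Scalar inequality for the one-step Lyapunov decrease. -/
theorem step_scalar_isihd (L h β c γ δ η p q r m ig ie D : ℝ)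
    (hL : 0 < L) (hh : 0 < h) (hβ : 0 ≤ β) (hγ : c ≤ γ)
    (hD : D = 1 + γ * h) (hδ : δ = (c * h - L * β * h - L * h ^ 2 / 2) / 2)
    (hη : η = 1 / 2 + L * β * h / 2 + δ)
    (hig : h ^ 2 * ig = r - D * q) (hr : r ≤ m) (hm : 2 * m ≤ p + q)
    (hie : h * ie ≤ L * β * m) (hp : 0 ≤ p) (hq : 0 ≤ q) (hm0 : 0 ≤ m) :
    ig + ie + L / 2 * q + η / h ^ 2 * q + δ / h ^ 2 * (p + q) ≤ η / h ^ 2 * p := by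
  subst hD hδ hη
  have h2 : (0 : ℝ) < h ^ 2 := by positivity
  have a2 : (0:ℝ) ≤ p + q - 2 * m := by linarith
  have a3 : (0:ℝ) ≤ (γ - c) * h * q :=
    mul_nonneg (mul_nonneg (sub_nonneg.2 hγ) hh.le) hq
  have a4 : h ^ 2 * ie ≤ h * (L * β * m) := by nlinarith [mul_le_mul_of_nonneg_left hie hh.le]
  have a5 : (0:ℝ) ≤ L * β * h * (p + q - 2 * m) :=
    mul_nonneg (mul_nonneg (mul_nonneg hL.le hβ) hh.le) a2
  have key : h ^ 2 * ig + h ^ 2 * ie + h ^ 2 * (L / 2 * q)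
      + (1 / 2 + L * β * h / 2 + (c * h - L * β * h - L * h ^ 2 / 2) / 2) * q
      + (c * h - L * β * h - L * h ^ 2 / 2) / 2 * (p + q)
      ≤ (1 / 2 + L * β * h / 2 + (c * h - L * β * h - L * h ^ 2 / 2) / 2) * p := by
    rw [hig]; linarith
  rw [← sub_nonneg]
  have expand : (1 / 2 + L * β * h / 2 + (c * h - L * β * h - L * h ^ 2 / 2) / 2) / h ^ 2 * p
      - (ig + ie + L / 2 * q
        + (1 / 2 + L * β * h / 2 + (c * h - L * β * h - L * h ^ 2 / 2) / 2) / h ^ 2 * q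
        + (c * h - L * β * h - L * h ^ 2 / 2) / 2 / h ^ 2 * (p + q))
      = ((1 / 2 + L * β * h / 2 + (c * h - L * β * h - L * h ^ 2 / 2) / 2) * p
        - (h ^ 2 * ig + h ^ 2 * ie + h ^ 2 * (L / 2 * q)
          + (1 / 2 + L * β * h / 2 + (c * h - L * β * h - L * h ^ 2 / 2) / 2) * q
          + (c * h - L * β * h - L * h ^ 2 / 2) / 2 * (p + q))) / h ^ 2 := by
    field_simp
  rw [expand]
  exact div_nonneg (by linarith) h2.le

/-- The discrete scheme ISIHD-Disc
`x_{k+1} = x_k + α_k(x_k − x_{k−1}) − s_k ∇f(x_k + β'(x_k − x_{k−1}))`,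
with `α_k = 1/(1 + γ_k h)`, `s_k = h²α_k`, `β' = β/h`, under the stepsize
condition `β + h/2 < c/L`, satisfies `Σ_k ‖∇f(x_k)‖² < ∞` and
`Σ_k ‖x_{k+1} − x_k‖² < ∞`; in particular `‖∇f(x_k)‖ → 0`. -/
theorem isihd_disc_summability
    (d : ℕ) (f : EuclideanSpace ℝ (Fin d) → ℝ) (L h β c C : ℝ) (γ : ℕ → ℝ)
    (hf : ContDiff ℝ 2 f) (hbdd : BddBelow (Set.range f))
    (hL : 0 < L) (hlip : LipschitzWith (Real.toNNReal L) (gradient f))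
    (hh : 0 < h) (hβ : 0 ≤ β) (hc : 0 < c) (hcC : c ≤ C)
    (hγ : ∀ k, c ≤ γ k ∧ γ k ≤ C)
    (hstep : β + h / 2 < c / L)
    (x : ℕ → EuclideanSpace ℝ (Fin d))
    (hrec : ∀ k : ℕ, 1 ≤ k →
      x (k + 1) = x k + (1 / (1 + γ k * h)) • (x k - x (k - 1))
        - (h ^ 2 * (1 / (1 + γ k * h))) •
            gradient f (x k + (β / h) • (x k - x (k - 1)))) :
    Summable (fun k => ‖gradient f (x k)‖ ^ 2) ∧
    Summable (fun k => ‖x (k + 1) - x k‖ ^ 2) ∧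
    Tendsto (fun k => ‖gradient f (x k)‖) atTop (𝓝 0) := by
  have hdiff : Differentiable ℝ f := hf.differentiable two_ne_zero
  have h2 : (0 : ℝ) < h ^ 2 := by positivity
  have hstep' : (β + h / 2) * L < c := (lt_div_iff₀ hL).1 hstep
  obtain ⟨u, hu_def⟩ : ∃ u : ℕ → ℝ, u = fun j => ‖x (j + 1) - x j‖ ^ 2 := ⟨_, rfl⟩
  obtain ⟨δ, hδdef⟩ : ∃ t : ℝ, t = (c * h - L * β * h - L * h ^ 2 / 2) / 2 := ⟨_, rfl⟩
  obtain ⟨η, hηdef⟩ : ∃ t : ℝ, t = 1 / 2 + L * β * h / 2 + δ := ⟨_, rfl⟩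
  have hδ : 0 < δ := by rw [hδdef]; nlinarith
  have hη : 0 ≤ η := by
    rw [hηdef, hδdef]
    nlinarith [mul_nonneg (mul_nonneg hL.le hβ) hh.le]
  have hδh : 0 < δ / h ^ 2 := by positivity
  have hηh : 0 ≤ η / h ^ 2 := by positivity
  obtain ⟨E, hEdef⟩ : ∃ E : ℕ → ℝ, E = fun k => f (x (k + 1)) + η / h ^ 2 * u k := ⟨_, rfl⟩
  have hu0 : ∀ j, 0 ≤ u j := fun j => by rw [hu_def]; positivity
  -- key one-step Lyapunov decrease
  have key : ∀ k : ℕ, E (k + 1) + δ / h ^ 2 * (u k + u (k + 1)) ≤ E k := by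
    intro k
    have hrk := hrec (k + 1) (Nat.le_add_left 1 k)
    simp only [Nat.add_sub_cancel] at hrk
    obtain ⟨w', hw'def⟩ : ∃ t, t = x (k + 1) - x k := ⟨_, rfl⟩
    obtain ⟨w, hwdef⟩ : ∃ t, t = x (k + 1 + 1) - x (k + 1) := ⟨_, rfl⟩
    obtain ⟨D, hDdef⟩ : ∃ t : ℝ, t = 1 + γ (k + 1) * h := ⟨_, rfl⟩
    rw [← hw'def, ← hDdef] at hrk
    obtain ⟨g, hgdef⟩ : ∃ t, t = gradient f (x (k + 1) + (β / h) • w') := ⟨_, rfl⟩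
    obtain ⟨G, hGdef⟩ : ∃ t, t = gradient f (x (k + 1)) := ⟨_, rfl⟩
    rw [← hgdef] at hrk
    have hD : 0 < D := by rw [hDdef]; nlinarith [(hγ (k + 1)).1]
    have hD' : D ≠ 0 := ne_of_gt hD
    have hw : w = (1 / D) • w' - (h ^ 2 * (1 / D)) • g := by rw [hwdef, hrk]; abel
    have hsg : (h ^ 2 * (1 / D)) • g = (1 / D) • w' - w := by rw [hw]; abel
    have hsg2 : (h ^ 2 : ℝ) • g = w' - D • w := by
      have h1 := congrArg (fun z : EuclideanSpace ℝ (Fin d) => D • z) hsg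
      simp only [smul_smul, smul_sub] at h1
      rw [show D * (h ^ 2 * (1 / D)) = h ^ 2 by field_simp,
        show D * (1 / D) = 1 by field_simp, one_smul] at h1
      exact h1
    have hig : h ^ 2 * ⟪g, w⟫ = ⟪w', w⟫ - D * ‖w‖ ^ 2 := by
      have h1 := congrArg (fun z : EuclideanSpace ℝ (Fin d) => ⟪z, w⟫) hsg2
      simp only [inner_sub_left, real_inner_smul_left,
        real_inner_self_eq_norm_sq] at h1
      exact h1
    have hdesc := descent_lemma_isihd f L hL.le hdiff hlip (x (k + 1)) (x (k + 1 + 1))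
    rw [← hwdef, ← hGdef] at hdesc
    have hsplit : ⟪G, w⟫ = ⟪g, w⟫ + ⟪G - g, w⟫ := by
      rw [inner_sub_left]; ring
    have hr : ⟪w', w⟫ ≤ ‖w'‖ * ‖w‖ := real_inner_le_norm _ _
    have hm : 2 * (‖w'‖ * ‖w‖) ≤ ‖w'‖ ^ 2 + ‖w‖ ^ 2 := by
      nlinarith [sq_nonneg (‖w'‖ - ‖w‖)]
    have hGg : ‖G - g‖ ≤ L * (β / h * ‖w'‖) := by
      have hd := hlip.dist_le_mul (x (k + 1)) (x (k + 1) + (β / h) • w')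
      rw [dist_eq_norm, dist_eq_norm, Real.coe_toNNReal L hL.le] at hd
      have hnorm : ‖x (k + 1) - (x (k + 1) + (β / h) • w')‖ = β / h * ‖w'‖ := by
        have he : x (k + 1) - (x (k + 1) + (β / h) • w') = -((β / h) • w') := by abel
        rw [he, norm_neg, norm_smul, Real.norm_eq_abs,
          abs_of_nonneg (div_nonneg hβ hh.le)]
      rw [hnorm] at hd
      rw [← hGdef, ← hgdef] at hd
      exact hd
    have hie : h * ⟪G - g, w⟫ ≤ L * β * (‖w'‖ * ‖w‖) := by
      have h1 : ⟪G - g, w⟫ ≤ ‖G - g‖ * ‖w‖ := real_inner_le_norm _ _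
      have h3 : ‖G - g‖ * ‖w‖ ≤ L * (β / h * ‖w'‖) * ‖w‖ :=
        mul_le_mul_of_nonneg_right hGg (norm_nonneg _)
      have h4 : h * (L * (β / h * ‖w'‖) * ‖w‖) = L * β * (‖w'‖ * ‖w‖) := by
        field_simp
      have h5 : h * ⟪G - g, w⟫ ≤ h * (L * (β / h * ‖w'‖) * ‖w‖) :=
        mul_le_mul_of_nonneg_left (le_trans h1 h3) hh.le
      rw [h4] at h5
      exact h5
    have hfin := step_scalar_isihd L h β c (γ (k + 1)) δ η (‖w'‖ ^ 2) (‖w‖ ^ 2)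
      ⟪w', w⟫ (‖w'‖ * ‖w‖) ⟪g, w⟫ ⟪G - g, w⟫ D hL hh hβ (hγ (k + 1)).1 hDdef
      (by rw [hδdef]) (by rw [hηdef, hδdef]) hig hr hm hie (by positivity) (by positivity)
      (mul_nonneg (norm_nonneg _) (norm_nonneg _))
    rw [hEdef, hu_def]
    simp only
    rw [← hwdef, ← hw'def]
    linarith [hdesc, hfin, hsplit.ge, hsplit.le]
  -- lower bound for E
  obtain ⟨B, hB⟩ := hbdd
  have hBf : ∀ z, B ≤ f z := fun z => hB (mem_range_self z)
  have hEB : ∀ k, B ≤ E k := by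
    intro k
    rw [hEdef]
    simp only
    have := mul_nonneg hηh (hu0 k)
    linarith [hBf (x (k + 1))]
  -- telescoping
  have tele : ∀ N : ℕ, E N + δ / h ^ 2 * ∑ j ∈ Finset.range N, u j ≤ E 0 := by
    intro N
    induction N with
    | zero => simp
    | succ n ih =>
      have hk := key n
      rw [Finset.sum_range_succ, mul_add]
      have hnn : 0 ≤ δ / h ^ 2 * u (n + 1) := mul_nonneg hδh.le (hu0 _)
      have hd : δ / h ^ 2 * (u n + u (n + 1))
          = δ / h ^ 2 * u n + δ / h ^ 2 * u (n + 1) := mul_add _ _ _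
      linarith
  have hsum_le : ∀ N : ℕ, ∑ j ∈ Finset.range N, u j ≤ (E 0 - B) / (δ / h ^ 2) := by
    intro N
    have h1 : δ / h ^ 2 * ∑ j ∈ Finset.range N, u j ≤ E 0 - B := by
      linarith [tele N, hEB N]
    rw [le_div_iff₀ hδh]
    linarith [h1]
  have hu : Summable u := summable_of_sum_range_le hu0 hsum_le
  -- gradient bound
  obtain ⟨KK, hKKdef⟩ : ∃ t : ℝ, t = (1 + C * h + h * L * β) / h ^ 2 := ⟨_, rfl⟩
  have hC : 0 < C := lt_of_lt_of_le hc hcC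
  have hnum : (0:ℝ) ≤ 1 + C * h + h * L * β := by
    nlinarith [mul_nonneg (mul_nonneg hh.le hL.le) hβ]
  have hKK0 : 0 ≤ KK := hKKdef ▸ div_nonneg hnum h2.le
  have hKKval : h ^ 2 * KK = 1 + C * h + h * L * β := by
    rw [hKKdef]; field_simp
  have hgb : ∀ k : ℕ, ‖gradient f (x (k + 1))‖ ^ 2 ≤ 2 * KK ^ 2 * (u k + u (k + 1)) := by
    intro k
    have hrk := hrec (k + 1) (Nat.le_add_left 1 k)
    simp only [Nat.add_sub_cancel] at hrk
    obtain ⟨w', hw'def⟩ : ∃ t, t = x (k + 1) - x k := ⟨_, rfl⟩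
    obtain ⟨w, hwdef⟩ : ∃ t, t = x (k + 1 + 1) - x (k + 1) := ⟨_, rfl⟩
    obtain ⟨D, hDdef⟩ : ∃ t : ℝ, t = 1 + γ (k + 1) * h := ⟨_, rfl⟩
    rw [← hw'def, ← hDdef] at hrk
    obtain ⟨g, hgdef⟩ : ∃ t, t = gradient f (x (k + 1) + (β / h) • w') := ⟨_, rfl⟩
    obtain ⟨G, hGdef⟩ : ∃ t, t = gradient f (x (k + 1)) := ⟨_, rfl⟩
    rw [← hgdef] at hrk
    have hD : 0 < D := by rw [hDdef]; nlinarith [(hγ (k + 1)).1]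
    have hD' : D ≠ 0 := ne_of_gt hD
    have hDC : D ≤ 1 + C * h := by rw [hDdef]; nlinarith [(hγ (k + 1)).2]
    have hw : w = (1 / D) • w' - (h ^ 2 * (1 / D)) • g := by rw [hwdef, hrk]; abel
    have hsg : (h ^ 2 * (1 / D)) • g = (1 / D) • w' - w := by rw [hw]; abel
    have hsg2 : (h ^ 2 : ℝ) • g = w' - D • w := by
      have h1 := congrArg (fun z : EuclideanSpace ℝ (Fin d) => D • z) hsg
      simp only [smul_smul, smul_sub] at h1
      rw [show D * (h ^ 2 * (1 / D)) = h ^ 2 by field_simp,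
        show D * (1 / D) = 1 by field_simp, one_smul] at h1
      exact h1
    have hgn : h ^ 2 * ‖g‖ ≤ ‖w'‖ + D * ‖w‖ := by
      have e1 : ‖(h ^ 2 : ℝ) • g‖ = h ^ 2 * ‖g‖ := by
        rw [norm_smul, Real.norm_eq_abs, abs_of_pos h2]
      have e2 : ‖D • w‖ = D * ‖w‖ := by
        rw [norm_smul, Real.norm_eq_abs, abs_of_pos hD]
      calc h ^ 2 * ‖g‖ = ‖(h ^ 2 : ℝ) • g‖ := e1.symm
        _ = ‖w' - D • w‖ := by rw [hsg2]
        _ ≤ ‖w'‖ + ‖D • w‖ := norm_sub_le _ _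
        _ = ‖w'‖ + D * ‖w‖ := by rw [e2]
    have hGg : ‖G - g‖ ≤ L * (β / h * ‖w'‖) := by
      have hd := hlip.dist_le_mul (x (k + 1)) (x (k + 1) + (β / h) • w')
      rw [dist_eq_norm, dist_eq_norm, Real.coe_toNNReal L hL.le] at hd
      have hnorm : ‖x (k + 1) - (x (k + 1) + (β / h) • w')‖ = β / h * ‖w'‖ := by
        have he : x (k + 1) - (x (k + 1) + (β / h) • w') = -((β / h) • w') := by abel
        rw [he, norm_neg, norm_smul, Real.norm_eq_abs,
          abs_of_nonneg (div_nonneg hβ hh.le)]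
      rw [hnorm] at hd
      rw [← hGdef, ← hgdef] at hd
      exact hd
    have hGn : h ^ 2 * ‖G‖ ≤ h ^ 2 * ‖g‖ + h * (L * β * ‖w'‖) := by
      have t1 : ‖G‖ ≤ ‖g‖ + ‖G - g‖ := by
        calc ‖G‖ = ‖g + (G - g)‖ := by congr 1; abel
          _ ≤ ‖g‖ + ‖G - g‖ := norm_add_le _ _
      have t2 : h ^ 2 * ‖G - g‖ ≤ h * (L * β * ‖w'‖) := by
        have t3 := mul_le_mul_of_nonneg_left hGg h2.le
        have e : h ^ 2 * (L * (β / h * ‖w'‖)) = h * (L * β * ‖w'‖) := by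
          field_simp
        rw [e] at t3
        exact t3
      nlinarith [mul_le_mul_of_nonneg_left t1 h2.le]
    have hKk : h ^ 2 * ‖G‖ ≤ h ^ 2 * KK * (‖w'‖ + ‖w‖) := by
      rw [hKKval]
      nlinarith [hgn, hGn, norm_nonneg w, norm_nonneg w',
        mul_nonneg (sub_nonneg.2 hDC) (norm_nonneg w),
        mul_nonneg (mul_nonneg hC.le hh.le) (norm_nonneg w'),
        mul_nonneg (mul_nonneg (mul_nonneg hh.le hL.le) hβ) (norm_nonneg w)]
    have hGK : ‖G‖ ≤ KK * (‖w'‖ + ‖w‖) := by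
      have h' : h ^ 2 * ‖G‖ ≤ h ^ 2 * (KK * (‖w'‖ + ‖w‖)) := by linarith [hKk]
      exact le_of_mul_le_mul_left h' h2
    rw [hu_def]
    simp only
    rw [← hw'def, ← hwdef, ← hGdef]
    nlinarith [mul_self_le_mul_self (norm_nonneg G) hGK,
      sq_nonneg (KK * (‖w'‖ - ‖w‖)), sq_nonneg KK]
  -- assemble the three conclusions
  have hshift : Summable (fun k => u (k + 1)) := (summable_nat_add_iff 1).2 hu
  have hsum2 : Summable (fun k => 2 * KK ^ 2 * (u k + u (k + 1))) := (hu.add hshift).mul_left _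
  have hsum3 : Summable (fun k => ‖gradient f (x (k + 1))‖ ^ 2) :=
    Summable.of_nonneg_of_le (fun k => by positivity) hgb hsum2
  have goal1 : Summable (fun k => ‖gradient f (x k)‖ ^ 2) :=
    (summable_nat_add_iff 1).1 hsum3
  have goal2 : Summable (fun k => ‖x (k + 1) - x k‖ ^ 2) := hu_def ▸ hu
  have goal3 : Tendsto (fun k => ‖gradient f (x k)‖) atTop (𝓝 0) := by
    have ht := goal1.tendsto_atTop_zero
    have hs := ht.sqrt
    rw [Real.sqrt_zero] at hs
    have he : (fun k => Real.sqrt (‖gradient f (x k)‖ ^ 2)) = fun k => ‖gradient f (x k)‖ :=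
      funext fun k => Real.sqrt_sq (norm_nonneg _)
    rwa [he] at hs
  exact ⟨goal1, goal2, goal3⟩
end
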